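/- For every odd integer s and every positive integer l, the derivative of the Fibonacci polynomial satisfies F'_{3·2^{l-1}}(s) ≡ 0 (mod 2^l) and F'_{3·2^{l-1}+1}(s) ≡ 2^{l-1} (mod 2^l). -/

import Mathlib

/-! The doubling formulas `F_{2N} = F_N (2 F_{N+1} - X F_N)` and `F_{2N+1} = F_{N+1}² + F_N²`,
together with their derivatives, propagate from `N = 3·2^k` to `N = 3·2^(k+1)` the invariant:
at an odd `s`, `2^(k+1)` divides `F_N(s)` and `F'_N(s)`, `F_{N+1}(s)` is odd, and `F'_{N+1}(s)`
is `2^k` times an odd number. The base case `N = 3` is `F_3 = X² + 1`, `F_4 = X³ + 2X`. -/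

open Polynomial

noncomputable def fibPoly : ℕ → Polynomial ℤ
  | 0 => 0
  | 1 => 1
  | n + 2 => X * fibPoly (n + 1) + fibPoly n

theorem fibPoly_add_two (n : ℕ) : fibPoly (n + 2) = X * fibPoly (n + 1) + fibPoly n := rfl

theorem fibPoly_add (m n : ℕ) :
    fibPoly (m + n + 1) = fibPoly (m + 1) * fibPoly (n + 1) + fibPoly m * fibPoly n := by
  induction m using Nat.twoStepInduction generalizing n with
  | zero => simp [fibPoly]
  | one => simp [fibPoly, add_comm 1 n]
  | more m ih₀ ih₁ =>
    rw [show m + 2 + n + 1 = (m + n + 1) + 2 by omega, show m + 2 + 1 = (m + 1) + 2 by omega,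
      fibPoly_add_two (m + n + 1), fibPoly_add_two (m + 1),
      show m + n + 1 + 1 = m + 1 + n + 1 by omega, ih₀, ih₁, fibPoly_add_two m]
    ring

theorem fibPoly_two_mul_add_one (n : ℕ) :
    fibPoly (2 * n + 1) = fibPoly (n + 1) ^ 2 + fibPoly n ^ 2 := by
  rw [two_mul, fibPoly_add]
  ring

theorem fibPoly_two_mul (n : ℕ) :
    fibPoly (2 * n) = fibPoly n * (2 * fibPoly (n + 1) - X * fibPoly n) := by
  have h := fibPoly_add (n + 1) n
  rw [show n + 1 + n + 1 = 2 * n + 2 by omega, fibPoly_add_two, fibPoly_two_mul_add_one,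
    fibPoly_add_two] at h
  linear_combination h

theorem two_pow_mul_odd_modEq {o : ℤ} (ho : Odd o) (k : ℕ) :
    2 ^ k * o ≡ 2 ^ k [ZMOD 2 ^ (k + 1)] := by
  obtain ⟨m, rfl⟩ := ho
  exact Int.modEq_iff_dvd.mpr ⟨-m, by ring⟩

theorem two_adic_doubling_step {k : ℕ} {s A B C D : ℤ} (hA : 2 ^ (k + 1) ∣ A) (hB : Odd B)
    (hC : 2 ^ (k + 1) ∣ C) (hD : ∃ o, Odd o ∧ D = 2 ^ k * o) :
    2 ^ (k + 2) ∣ A * (2 * B - s * A) ∧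
    Odd (B ^ 2 + A ^ 2) ∧
    2 ^ (k + 2) ∣ C * (2 * B - s * A) + A * (2 * D - (A + s * C)) ∧
    ∃ o, Odd o ∧ 2 * B * D + 2 * A * C = 2 ^ (k + 1) * o := by
  obtain ⟨a, rfl⟩ := hA
  obtain ⟨c, rfl⟩ := hC
  obtain ⟨o, ho, rfl⟩ := hD
  refine ⟨⟨a * (B - 2 ^ k * s * a), by ring⟩, hB.pow.add_even ⟨2 ^ (2 * k + 1) * a ^ 2, by ring⟩,
    ⟨c * (B - 2 ^ k * s * a) + 2 ^ k * a * (o - a - s * c), by ring⟩,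
    B * o + 2 ^ (k + 2) * a * c, (hB.mul ho).add_even ⟨2 ^ (k + 1) * a * c, by ring⟩, by ring⟩

theorem fibPoly_eval_three_mul_two_pow {s : ℤ} (hs : Odd s) (k : ℕ) :
    2 ^ (k + 1) ∣ (fibPoly (3 * 2 ^ k)).eval s ∧
    Odd ((fibPoly (3 * 2 ^ k + 1)).eval s) ∧
    2 ^ (k + 1) ∣ (derivative (fibPoly (3 * 2 ^ k))).eval s ∧
    ∃ o, Odd o ∧ (derivative (fibPoly (3 * 2 ^ k + 1))).eval s = 2 ^ k * o := by
  induction k with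
  | zero =>
    have h₃ : fibPoly 3 = X ^ 2 + 1 := by simp [fibPoly]; ring
    have h₄ : fibPoly 4 = X ^ 3 + 2 * X := by simp [fibPoly]; ring
    simp only [pow_zero, mul_one, Nat.reduceAdd, h₃, h₄, derivative_add, derivative_mul,
      derivative_X_pow, derivative_X, derivative_one, derivative_ofNat, eval_add, eval_mul,
      eval_pow, eval_X, eval_one, eval_ofNat, eval_C, Nat.cast_ofNat, Nat.reduceSub, pow_one,
      zero_mul, zero_add, add_zero, one_mul]
    exact ⟨(hs.pow.add_odd odd_one).two_dvd, hs.pow.add_even (even_two_mul s), dvd_mul_right 2 s,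
      _, ((by decide : Odd (3 : ℤ)).mul hs.pow).add_even even_two, rfl⟩
  | succ k ih =>
    obtain ⟨hA, hB, hC, hD⟩ := ih
    rw [show 3 * 2 ^ (k + 1) = 2 * (3 * 2 ^ k) by ring, fibPoly_two_mul, fibPoly_two_mul_add_one]
    simp only [derivative_mul, derivative_add, derivative_sub, derivative_pow, derivative_X,
      derivative_ofNat, eval_mul, eval_add, eval_sub, eval_pow, eval_X, eval_ofNat, eval_C,
      zero_mul, zero_add, one_mul, Nat.add_one_sub_one, pow_one, Nat.cast_ofNat]
    exact two_adic_doubling_step hA hB hC hD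

theorem fibPoly_deriv_eval_odd_mod (s : ℤ) (hs : Odd s) (l : ℕ) (hl : 1 ≤ l) :
    (derivative (fibPoly (3 * 2 ^ (l - 1)))).eval s ≡ 0 [ZMOD (2 : ℤ) ^ l] ∧
    (derivative (fibPoly (3 * 2 ^ (l - 1) + 1))).eval s ≡ 2 ^ (l - 1)
      [ZMOD (2 : ℤ) ^ l] := by
  obtain ⟨k, rfl⟩ : ∃ k, l = k + 1 := ⟨l - 1, by omega⟩
  obtain ⟨-, -, hC, o, ho, hD⟩ := fibPoly_eval_three_mul_two_pow hs k
  rw [Nat.add_sub_cancel, hD]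
  exact ⟨Int.modEq_zero_iff_dvd.mpr hC, two_pow_mul_odd_modEq ho k⟩
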